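/- In the polynomial ring ℂ[H_0, H_1] modulo the ideal I = (H_0⁴(2H_0+H_1), H_1⁴(H_0+2H_1)), the homogeneous component of degree 8 of the quotient ring is one-dimensional over ℂ. -/

import Mathlib

open MvPolynomial

noncomputable def chowIdeal1 : Ideal (MvPolynomial (Fin 2) ℂ) :=
  Ideal.span {X 0 ^ 4 * (2 * X 0 + X 1), X 1 ^ 4 * (X 0 + 2 * X 1)}

/-!
Modulo `X₀⁴(2X₀ + X₁)` one may trade `X₀⁴ X₁` for `-2 X₀⁵`, and symmetrically modulo the other
generator. Walking along the degree-8 monomials from both ends, every class `[X₀ⁱ X₁ʲ]` is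
`(-2)^(min i j) [X₀⁸]`, so the degree-8 piece is spanned by `[X₀⁸]`. Conversely, the linear form
sending `X₀ⁱ X₁ʲ` to `(-2)^(min i j)` in degree 8 (and to `0` elsewhere) kills both generators
times every monomial, hence kills the ideal, while it takes the value `1` on `X₀⁸`; so `[X₀⁸] ≠ 0`.
-/

theorem Ideal.Quotient.mk_pow_mul_pow_eq {R : Type*} [CommRing R] {I : Ideal R} {x y c : R}
    {n : ℕ} (h : x ^ n * (c * x + y) ∈ I) (a b : ℕ) :
    Ideal.Quotient.mk I (x ^ (n + a) * y ^ b) =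
      Ideal.Quotient.mk I ((-c) ^ b * x ^ (n + a + b)) := by
  induction b generalizing a with
  | zero => simp
  | succ b ih =>
    have hstep : Ideal.Quotient.mk I (x ^ (n + a) * y ^ (b + 1)) =
        Ideal.Quotient.mk I (-c * (x ^ (n + (a + 1)) * y ^ b)) := by
      rw [Ideal.Quotient.eq]
      convert I.mul_mem_left (x ^ a * y ^ b) h using 1
      ring
    rw [hstep, map_mul, ih, ← map_mul]
    ring_nf

namespace MvPolynomial

theorem linearMap_mul_eq_zero {σ R M : Type*} [CommSemiring R] [AddCommMonoid M]
    [Module R M] (L : MvPolynomial σ R →ₗ[R] M) {g : MvPolynomial σ R}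
    (h : ∀ s, L (monomial s 1 * g) = 0) (p : MvPolynomial σ R) : L (p * g) = 0 := by
  induction p using MvPolynomial.induction_on' with
  | monomial s c =>
    rw [show monomial s c = c • monomial s 1 by rw [smul_monomial, smul_eq_mul, mul_one],
      smul_mul_assoc, map_smul, h, smul_zero]
  | add p q hp hq => rw [add_mul, map_add, hp, hq, add_zero]

theorem homogeneousSubmodule_eq_span_monomial (σ R : Type*) [CommSemiring R] (n : ℕ) :
    homogeneousSubmodule σ R n =
      Submodule.span R ((fun s => monomial s (1 : R)) '' {s | s.degree = n}) := by
  rw [homogeneousSubmodule_eq_finsupp_supported, AddMonoidAlgebra.supported_eq_span_single]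
  rfl

theorem X_pow_mul_X_pow_eq_monomial {R : Type*} [CommSemiring R] (i j : ℕ) :
    (X 0 ^ i * X 1 ^ j : MvPolynomial (Fin 2) R) =
      monomial (Finsupp.single 0 i + Finsupp.single 1 j) 1 := by
  simp [monomial_fin_two]

end MvPolynomial

namespace chowIdeal1

theorem X_zero_relation_mem :
    (X 0 ^ 4 * (2 * X 0 + X 1) : MvPolynomial (Fin 2) ℂ) ∈ chowIdeal1 :=
  Ideal.subset_span (by simp)

theorem X_one_relation_mem :
    (X 1 ^ 4 * (2 * X 1 + X 0) : MvPolynomial (Fin 2) ℂ) ∈ chowIdeal1 :=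
  Ideal.subset_span (by simp [add_comm])

theorem mkₐ_neg_two_pow_mul (k : ℕ) (p : MvPolynomial (Fin 2) ℂ) :
    Ideal.Quotient.mkₐ ℂ chowIdeal1 ((-2) ^ k * p) =
      ((-2) ^ k : ℂ) • Ideal.Quotient.mkₐ ℂ chowIdeal1 p := by
  rw [← map_smul, smul_eq_C_mul, map_pow, map_neg, map_ofNat]

theorem mkₐ_X_pow_mul_X_pow_of_right_le {i j : ℕ} (hij : i + j = 8) (hj : j ≤ 4) :
    Ideal.Quotient.mkₐ ℂ chowIdeal1 (X 0 ^ i * X 1 ^ j) =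
      ((-2) ^ j : ℂ) • Ideal.Quotient.mkₐ ℂ chowIdeal1 (X 0 ^ 8) := by
  obtain ⟨a, rfl⟩ : ∃ a, i = 4 + a := ⟨i - 4, by omega⟩
  rw [Ideal.Quotient.mkₐ_eq_mk, Ideal.Quotient.mk_pow_mul_pow_eq X_zero_relation_mem,
    ← Ideal.Quotient.mkₐ_eq_mk ℂ, mkₐ_neg_two_pow_mul, show 4 + a + j = 8 by omega]

theorem mkₐ_X_pow_mul_X_pow_of_left_le {i j : ℕ} (hij : i + j = 8) (hi : i ≤ 4) :
    Ideal.Quotient.mkₐ ℂ chowIdeal1 (X 0 ^ i * X 1 ^ j) =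
      ((-2) ^ i : ℂ) • Ideal.Quotient.mkₐ ℂ chowIdeal1 (X 1 ^ 8) := by
  obtain ⟨b, rfl⟩ : ∃ b, j = 4 + b := ⟨j - 4, by omega⟩
  rw [mul_comm, Ideal.Quotient.mkₐ_eq_mk, Ideal.Quotient.mk_pow_mul_pow_eq X_one_relation_mem,
    ← Ideal.Quotient.mkₐ_eq_mk ℂ, mkₐ_neg_two_pow_mul, show 4 + b + i = 8 by omega]

theorem mkₐ_X_one_pow_eight :
    Ideal.Quotient.mkₐ ℂ chowIdeal1 (X 1 ^ 8) = Ideal.Quotient.mkₐ ℂ chowIdeal1 (X 0 ^ 8) :=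
  smul_right_injective _ (by norm_num : ((-2) ^ 4 : ℂ) ≠ 0)
    ((mkₐ_X_pow_mul_X_pow_of_left_le rfl le_rfl).symm.trans
      (mkₐ_X_pow_mul_X_pow_of_right_le rfl le_rfl))

theorem mkₐ_X_pow_mul_X_pow {i j : ℕ} (hij : i + j = 8) :
    Ideal.Quotient.mkₐ ℂ chowIdeal1 (X 0 ^ i * X 1 ^ j) =
      ((-2) ^ min i j : ℂ) • Ideal.Quotient.mkₐ ℂ chowIdeal1 (X 0 ^ 8) := by
  rcases le_total j 4 with hj | hi
  · rw [min_eq_right (by omega), mkₐ_X_pow_mul_X_pow_of_right_le hij hj]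
  · rw [min_eq_left (by omega), mkₐ_X_pow_mul_X_pow_of_left_le hij (by omega),
      mkₐ_X_one_pow_eight]

def degEightWeight (i j : ℕ) : ℂ := if i + j = 8 then (-2) ^ min i j else 0

noncomputable def degEightForm : MvPolynomial (Fin 2) ℂ →ₗ[ℂ] ℂ :=
  (basisMonomials (Fin 2) ℂ).constr ℂ fun s => degEightWeight (s 0) (s 1)

theorem degEightForm_X_pow_mul_X_pow (i j : ℕ) :
    degEightForm (X 0 ^ i * X 1 ^ j) = degEightWeight i j := by
  rw [X_pow_mul_X_pow_eq_monomial, degEightForm,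
    show monomial _ 1 = basisMonomials (Fin 2) ℂ _ from rfl, Module.Basis.constr_basis]
  simp

theorem degEightForm_mul_X_zero_relation (p : MvPolynomial (Fin 2) ℂ) :
    degEightForm (p * (X 0 ^ 4 * (2 * X 0 + X 1))) = 0 := by
  refine linearMap_mul_eq_zero _ (fun s => ?_) p
  set i := s 0
  set j := s 1
  have hexpand : monomial s 1 * (X 0 ^ 4 * (2 * X 0 + X 1)) =
      (2 : ℂ) • (X 0 ^ (i + 5) * X 1 ^ j : MvPolynomial (Fin 2) ℂ) +
        X 0 ^ (i + 4) * X 1 ^ (j + 1) := by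
    rw [monomial_fin_two, smul_eq_C_mul, C_1, map_ofNat]
    ring
  rw [hexpand, map_add, map_smul, degEightForm_X_pow_mul_X_pow, degEightForm_X_pow_mul_X_pow,
    degEightWeight, degEightWeight]
  by_cases h : i + j = 3
  · rw [if_pos (by omega), if_pos (by omega), min_eq_right (by omega), min_eq_right (by omega)]
    ring
  · rw [if_neg (by omega), if_neg (by omega), smul_zero, add_zero]

theorem degEightForm_mul_X_one_relation (p : MvPolynomial (Fin 2) ℂ) :
    degEightForm (p * (X 1 ^ 4 * (X 0 + 2 * X 1))) = 0 := by
  refine linearMap_mul_eq_zero _ (fun s => ?_) p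
  set i := s 0
  set j := s 1
  have hexpand : monomial s 1 * (X 1 ^ 4 * (X 0 + 2 * X 1)) =
      X 0 ^ (i + 1) * X 1 ^ (j + 4) +
        (2 : ℂ) • (X 0 ^ i * X 1 ^ (j + 5) : MvPolynomial (Fin 2) ℂ) := by
    rw [monomial_fin_two, smul_eq_C_mul, C_1, map_ofNat]
    ring
  rw [hexpand, map_add, map_smul, degEightForm_X_pow_mul_X_pow, degEightForm_X_pow_mul_X_pow,
    degEightWeight, degEightWeight]
  by_cases h : i + j = 3
  · rw [if_pos (by omega), if_pos (by omega), min_eq_left (by omega), min_eq_left (by omega)]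
    ring
  · rw [if_neg (by omega), if_neg (by omega), smul_zero, add_zero]

theorem degEightForm_eq_zero_of_mem {f : MvPolynomial (Fin 2) ℂ} (hf : f ∈ chowIdeal1) :
    degEightForm f = 0 := by
  obtain ⟨u, v, rfl⟩ := Ideal.mem_span_pair.mp hf
  rw [map_add, degEightForm_mul_X_zero_relation, degEightForm_mul_X_one_relation, add_zero]

theorem mkₐ_X_zero_pow_eight_ne_zero : Ideal.Quotient.mkₐ ℂ chowIdeal1 (X 0 ^ 8) ≠ 0 := by
  intro h
  rw [Ideal.Quotient.mkₐ_eq_mk, Ideal.Quotient.eq_zero_iff_mem] at h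
  have hform := degEightForm_eq_zero_of_mem h
  rw [← mul_one (X 0 ^ 8), ← pow_zero (X 1), degEightForm_X_pow_mul_X_pow, degEightWeight]
    at hform
  norm_num at hform

end chowIdeal1

open chowIdeal1 in
theorem stmt15 :
    Module.finrank ℂ
      (↥(Submodule.map (Ideal.Quotient.mkₐ ℂ chowIdeal1).toLinearMap
          (homogeneousSubmodule (Fin 2) ℂ 8))) = 1 := by
  suffices h : Submodule.map (Ideal.Quotient.mkₐ ℂ chowIdeal1).toLinearMap
      (homogeneousSubmodule (Fin 2) ℂ 8) =
        Submodule.span ℂ {Ideal.Quotient.mkₐ ℂ chowIdeal1 (X 0 ^ 8)} by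
    rw [h, finrank_span_singleton mkₐ_X_zero_pow_eight_ne_zero]
  apply le_antisymm
  · rw [homogeneousSubmodule_eq_span_monomial, Submodule.map_span, Submodule.span_le]
    rintro _ ⟨_, ⟨s, hs, rfl⟩, rfl⟩
    rw [Set.mem_ofPred_eq, Finsupp.degree_eq_sum, Fin.sum_univ_two] at hs
    simp only [SetLike.mem_coe, AlgHom.toLinearMap_apply]
    rw [monomial_fin_two, C_1, one_mul, mkₐ_X_pow_mul_X_pow hs]
    exact Submodule.smul_mem _ _ (Submodule.mem_span_singleton_self _)
  · rw [Submodule.span_singleton_le_iff_mem]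
    exact ⟨X 0 ^ 8, isHomogeneous_X_pow 0 8, rfl⟩
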